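/- Let A be an abelian category that is F-linear over a field F, in which every object has finite length, and in which every nonzero object has semisimple endomorphism-behavior in the sense that Hom-groups are finite dimensional and the Jacobson radical of every endomorphism ring is zero. Then A is semisimple: every short exact sequence splits. -/

import Mathlib

/-!
The endomorphism ring of any object is finite dimensional over `F`, hence Artinian, and so it is
a semisimple ring because its Jacobson radical vanishes. Semisimple rings are von Neumann regular:
every `a` satisfies `a * b * a = a` for some `b`. Given an epimorphism `g : X ⟶ Z`, apply this in
`End (Z ⊞ X)` to `a = snd ≫ g ≫ inl`; cancelling the epimorphism `snd ≫ g` on the left and the split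
monomorphism `inl` on the right turns `a ≫ b ≫ a = a` into a section of `g`.
-/

open CategoryTheory Limits

universe v u

theorem IsSemisimpleRing.exists_mul_mul_eq_self {R : Type*} [Ring R] [IsSemisimpleRing R]
    (a : R) : ∃ b, a * b * a = a := by
  obtain ⟨e, he, hspan⟩ := IsSemisimpleRing.ideal_eq_span_idempotent (Ideal.span {a})
  obtain ⟨c, rfl⟩ : ∃ c, c * e = a :=
    Ideal.mem_span_singleton'.mp (hspan ▸ Ideal.mem_span_singleton_self a)
  obtain ⟨b, hb⟩ : ∃ b, b * (c * e) = e :=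
    Ideal.mem_span_singleton'.mp (hspan ▸ Ideal.mem_span_singleton_self e)
  exact ⟨b, by rw [mul_assoc, hb, mul_assoc, he.eq]⟩

section Preadditive

variable {C : Type*} [Category C] [Preadditive C]

theorem isSplitEpi_of_isSemisimpleRing_end {Y Z : C} [IsSemisimpleRing (End Y)]
    (p : Y ⟶ Z) [Epi p] (i : Z ⟶ Y) [IsSplitMono i] : IsSplitEpi p := by
  obtain ⟨b, hb⟩ := IsSemisimpleRing.exists_mul_mul_eq_self (R := End Y) (p ≫ i)
  rw [End.mul_def, End.mul_def] at hb
  refine IsSplitEpi.mk' ⟨i ≫ b, ?_⟩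
  rw [← cancel_epi p, ← cancel_mono i]
  simpa using hb

theorem isSplitEpi_of_isSemisimpleRing_end_biprod [HasBinaryBiproducts C] {X Z : C}
    [IsSemisimpleRing (End (Z ⊞ X))] (g : X ⟶ Z) [Epi g] : IsSplitEpi g := by
  have : IsSplitEpi (biprod.snd ≫ g : Z ⊞ X ⟶ Z) :=
    isSplitEpi_of_isSemisimpleRing_end _ biprod.inl
  exact IsSplitEpi.mk' ⟨section_ (biprod.snd ≫ g : Z ⊞ X ⟶ Z) ≫ biprod.snd, by
    rw [Category.assoc, IsSplitEpi.id]⟩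

end Preadditive

theorem isSemisimpleRing_end_of_jacobson_eq_bot (F : Type*) [Field F] {C : Type*} [Category C]
    [Preadditive C] [Linear F C] (X : C) [FiniteDimensional F (X ⟶ X)]
    (hrad : (⊥ : Ideal (End X)).jacobson = ⊥) : IsSemisimpleRing (End X) := by
  have : FiniteDimensional F (End X) := inferInstanceAs (FiniteDimensional F (X ⟶ X))
  have : IsArtinianRing (End X) := IsArtinianRing.of_finite F (End X)
  rw [IsArtinianRing.isSemisimpleRing_iff_jacobson, ← Ideal.jacobson_bot, hrad]

theorem semisimple_of_vanishing_jacobson_radical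
    (F : Type*) [Field F]
    (A : Type u) [Category.{v} A] [Abelian A] [Linear F A]
    -- every object has finite length:
    [∀ X : A, IsNoetherianObject X] [∀ X : A, IsArtinianObject X]
    -- Hom-spaces are finite dimensional over F:
    [∀ X Y : A, FiniteDimensional F (X ⟶ Y)]
    -- the Jacobson radical of every endomorphism ring is zero:
    (hrad : ∀ X : A, (⊥ : Ideal (End X)).jacobson = ⊥) :
    ∀ S : ShortComplex A, S.ShortExact → Nonempty S.Splitting := by
  intro S hS
  have := hS.epi_g
  have := isSemisimpleRing_end_of_jacobson_eq_bot F (S.X₃ ⊞ S.X₂) (hrad _)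
  have := isSplitEpi_of_isSemisimpleRing_end_biprod S.g
  exact ⟨.ofExactOfSection S hS.exact (section_ S.g) (by simp) hS.mono_f⟩
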